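/- arXiv:1611.00493 — 2 statements merged into one kernel-verified Lean document; each statement's English description precedes it below -/
import Mathlib

section
/- For all integers 1 ≤ m ≤ n, max_{m ≤ k ≤ n} |E[Zₖ*] − E[Zₙ*]| ≤ 2·Gₙ·P(T_g > m) + E[−Z_{T_g}; m < T_g ≤ n], where Gₙ := max_{k≤n} |gₖ|. -/
/-!
Write `P j = P(T_g > j)`. Since `Z (j+1) = Z j + X (j+1) - (g (j+1) - g j)` and `{T_g > j}` is
determined by `X 1, …, X j`, independence kills the increment and
`E[Z*_j] - E[Z*_{j+1}] = (g (j+1) - g j) P j + E[Z_{j+1}; T_g = j+1]`.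
Telescoping from `k` to `n`, summation by parts against the decreasing weights `P j` bounds the
boundary terms by `2 Gₙ P k ≤ 2 Gₙ P m`, and the exit terms add up to `E[Z_{T_g}; k < T_g ≤ n]`,
a nonpositive quantity whose size only grows when `k` is lowered to `m`.
-/

open MeasureTheory ProbabilityTheory Filter Finset

noncomputable section
namespace FirstPassage

variable {Ω : Type*}

/-- Partial sums `S n = X 1 + ... + X n` (so `S 0 = 0`). -/
def S (X : ℕ → Ω → ℝ) (n : ℕ) (ω : Ω) : ℝ := ∑ k ∈ Finset.Icc 1 n, X k ω

/-- The event `{T_g > n}`: the walk stays strictly above the boundary up to time `n`. -/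
def Surv (X : ℕ → Ω → ℝ) (g : ℕ → ℝ) (n : ℕ) : Set Ω :=
  {ω | ∀ k ∈ Finset.Icc 1 n, g k < S X k ω}

/-- The first passage time `T_g = min {n ≥ 1 : S n ≤ g n}` (junk value `0` if the walk
never crosses the boundary; note `sInf ∅ = 0` in `ℕ`). -/
def T (X : ℕ → Ω → ℝ) (g : ℕ → ℝ) (ω : Ω) : ℕ :=
  sInf {n | 1 ≤ n ∧ S X n ω ≤ g n}

/-- `Z n = S n - g n`. -/
def Z (X : ℕ → Ω → ℝ) (g : ℕ → ℝ) (n : ℕ) (ω : Ω) : ℝ := S X n ω - g n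

/-- `Z* n = Z n · 1{T_g > n}`. -/
def Zstar (X : ℕ → Ω → ℝ) (g : ℕ → ℝ) (n : ℕ) : Ω → ℝ :=
  (Surv X g n).indicator (Z X g n)

/-- `B n = (σ 1 ^ 2 + ... + σ n ^ 2) ^ (1/2)` where `σ k ^ 2 = E[(X k)^2]`. -/
def B [MeasurableSpace Ω] (μ : Measure Ω) (X : ℕ → Ω → ℝ) (n : ℕ) : ℝ :=
  Real.sqrt (∑ k ∈ Finset.Icc 1 n, ∫ ω, (X k ω) ^ 2 ∂μ)

/-- `S_{T_g}`, the walk evaluated at the first passage time. -/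
def ST (X : ℕ → Ω → ℝ) (g : ℕ → ℝ) (ω : Ω) : ℝ := S X (T X g ω) ω

/-- Summation by parts: the expression inside the absolute value equals
`∑ j ∈ Ioc k n, a j * (p (j - 1) - p j)`, a sum with nonnegative weights. -/
lemma abs_sum_Ico_sub_mul_sub_le {a p : ℕ → ℝ} {G : ℝ} (hp : Antitone p) {k n : ℕ}
    (hkn : k ≤ n) (ha : ∀ j ∈ Ioc k n, |a j| ≤ G) :
    |∑ j ∈ Ico k n, (a (j + 1) - a j) * p j - a n * p n + a k * p k| ≤ G * (p k - p n) := by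
  induction n, hkn using Nat.le_induction with
  | base => simp
  | succ n hkn ih =>
    have hIoc : Ioc k n ⊆ Ioc k (n + 1) := Ioc_subset_Ioc_right n.le_succ
    have hG : |a (n + 1)| ≤ G := ha _ (mem_Ioc.2 ⟨by omega, le_rfl⟩)
    have hpn : 0 ≤ p n - p (n + 1) := sub_nonneg.2 (hp n.le_succ)
    rw [sum_Ico_succ_top hkn]
    calc _ = |(∑ j ∈ Ico k n, (a (j + 1) - a j) * p j - a n * p n + a k * p k)
              + a (n + 1) * (p n - p (n + 1))| := by ring_nf
      _ ≤ G * (p k - p n) + G * (p n - p (n + 1)) := by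
          refine (abs_add_le _ _).trans (add_le_add (ih fun j hj => ha j (hIoc hj)) ?_)
          rw [abs_mul, abs_of_nonneg hpn]
          exact mul_le_mul_of_nonneg_right hG hpn
      _ = G * (p k - p (n + 1)) := by ring

lemma abs_sum_Ico_sub_mul_le {a p : ℕ → ℝ} {G : ℝ} (hp : Antitone p) {k n : ℕ} (hkn : k ≤ n)
    (hpn : 0 ≤ p n) (ha : ∀ j ∈ Icc k n, |a j| ≤ G) :
    |∑ j ∈ Ico k n, (a (j + 1) - a j) * p j| ≤ 2 * G * p k := by
  have hIoc : ∀ j ∈ Ioc k n, |a j| ≤ G := fun j hj => ha j (Ioc_subset_Icc_self hj)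
  have hn : |a n * p n| ≤ G * p n := by
    rw [abs_mul, abs_of_nonneg hpn]
    exact mul_le_mul_of_nonneg_right (ha n (right_mem_Icc.2 hkn)) hpn
  have hk : |a k * p k| ≤ G * p k := by
    rw [abs_mul, abs_of_nonneg (hpn.trans (hp hkn))]
    exact mul_le_mul_of_nonneg_right (ha k (left_mem_Icc.2 hkn)) (hpn.trans (hp hkn))
  have h := abs_sum_Ico_sub_mul_sub_le hp hkn hIoc
  calc _ = |(∑ j ∈ Ico k n, (a (j + 1) - a j) * p j - a n * p n + a k * p k)
            + a n * p n - a k * p k| := by ring_nf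
    _ ≤ G * (p k - p n) + G * p n + G * p k :=
        (abs_sub _ _).trans (add_le_add ((abs_add_le _ _).trans (add_le_add h hn)) hk)
    _ = 2 * G * p k := by ring

lemma _root_.Nat.sInf_eq_iff_of_ne_zero {s : Set ℕ} {n : ℕ} (hn : n ≠ 0) :
    sInf s = n ↔ n ∈ s ∧ ∀ l < n, l ∉ s := by
  constructor
  · rintro rfl
    exact ⟨Nat.sInf_mem (Nat.nonempty_of_pos_sInf (Nat.pos_of_ne_zero hn)),
      fun _ => Nat.notMem_of_lt_sInf⟩
  · rintro ⟨hmem, hlt⟩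
    exact le_antisymm (Nat.sInf_le hmem)
      (le_csInf ⟨n, hmem⟩ fun l hl => not_lt.1 fun h => hlt l h hl)

section FirstPassageTime

variable {X : ℕ → Ω → ℝ} {g : ℕ → ℝ}

lemma Surv_antitone : Antitone (Surv X g) :=
  fun _ _ hij _ hω k hk => hω k (Icc_subset_Icc_right hij hk)

lemma mem_Surv_iff {n : ℕ} {ω : Ω} :
    ω ∈ Surv X g n ↔ ∀ l < n + 1, l ∉ {l | 1 ≤ l ∧ S X l ω ≤ g l} := by
  simp only [Surv, Set.mem_ofPred_eq, mem_Icc, not_and, not_le]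
  exact ⟨fun h l hl h1 => h l ⟨h1, by omega⟩, fun h l hl => h l (by omega) hl.1⟩

lemma T_eq_succ_iff {j : ℕ} {ω : Ω} :
    T X g ω = j + 1 ↔ ω ∈ Surv X g j ∧ ω ∉ Surv X g (j + 1) := by
  rw [T, Nat.sInf_eq_iff_of_ne_zero j.succ_ne_zero, mem_Surv_iff, mem_Surv_iff]
  constructor
  · rintro ⟨hmem, hlt⟩
    exact ⟨hlt, fun h => h (j + 1) (by omega) hmem⟩
  · rintro ⟨hlt, hnot⟩
    push Not at hnot
    obtain ⟨l, hl, hlA⟩ := hnot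
    obtain rfl : l = j + 1 := by
      by_contra hne
      exact hlt l (by omega) hlA
    exact ⟨hlA, hlt⟩

lemma setOf_T_eq_succ (j : ℕ) : {ω | T X g ω = j + 1} = Surv X g j \ Surv X g (j + 1) :=
  Set.ext fun _ => T_eq_succ_iff

lemma Z_T_nonpos {ω : Ω} (hT : T X g ω ≠ 0) : Z X g (T X g ω) ω ≤ 0 :=
  sub_nonpos.2 (Nat.sInf_mem (Nat.nonempty_of_pos_sInf (Nat.pos_of_ne_zero hT))).2

lemma Z_succ (j : ℕ) (ω : Ω) :
    Z X g (j + 1) ω = Z X g j ω + X (j + 1) ω - (g (j + 1) - g j) := by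
  simp only [Z, S, sum_Icc_succ_top (Nat.le_add_left 1 j)]
  ring

end FirstPassageTime

section Integrals

variable {X : ℕ → Ω → ℝ} {g : ℕ → ℝ}

abbrev pastSigma (X : ℕ → Ω → ℝ) (j : ℕ) : MeasurableSpace Ω :=
  ⨆ i ∈ Set.Iic j, MeasurableSpace.comap (X i) inferInstance

lemma measurableSet_Surv_pastSigma (j : ℕ) : MeasurableSet[pastSigma X j] (Surv X g j) := by
  have hS : ∀ k ≤ j, Measurable[pastSigma X j] (S X k) := fun k hk =>
    Finset.measurable_sum _ fun i hi =>
      (comap_measurable (X i)).mono (le_iSup₂_of_le i (by simp at hi ⊢; omega) le_rfl) le_rfl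
  have hSurv : Surv X g j = ⋂ k ∈ Icc 1 j, {ω | g k < S X k ω} := by
    ext ω; simp [Surv]
  rw [hSurv]
  exact MeasurableSet.biInter (Icc 1 j).countable_toSet fun k hk =>
    measurableSet_lt measurable_const (hS k (mem_Icc.1 hk).2)

variable [MeasurableSpace Ω] {μ : Measure Ω}

lemma pastSigma_le (hmeas : ∀ k, Measurable (X k)) (j : ℕ) :
    pastSigma X j ≤ ‹MeasurableSpace Ω› :=
  iSup₂_le fun i _ => (hmeas i).comap_le

lemma measurableSet_Surv (hmeas : ∀ k, Measurable (X k)) (j : ℕ) :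
    MeasurableSet (Surv X g j) :=
  pastSigma_le hmeas j _ (measurableSet_Surv_pastSigma j)

lemma measurableSet_T_eq_succ (hmeas : ∀ k, Measurable (X k)) (j : ℕ) :
    MeasurableSet {ω | T X g ω = j + 1} :=
  setOf_T_eq_succ j ▸ (measurableSet_Surv hmeas j).diff (measurableSet_Surv hmeas (j + 1))

lemma setIntegral_Surv_X_succ [IsProbabilityMeasure μ] (hmeas : ∀ k, Measurable (X k))
    (hindep : iIndepFun X μ) (j : ℕ) :
    ∫ ω in Surv X g j, X (j + 1) ω ∂μ = μ.real (Surv X g j) * ∫ ω, X (j + 1) ω ∂μ := by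
  have hindep' : Indep (pastSigma X j) (MeasurableSpace.comap (X (j + 1)) inferInstance) μ := by
    have h := indep_iSup_of_disjoint (fun i => (hmeas i).comap_le)
      ((iIndepFun_iff_iIndep _ _ _).1 hindep) (S := Set.Iic j) (T := {j + 1}) (by simp)
    rwa [_root_.iSup_singleton] at h
  exact hindep'.setIntegral_eq_mul (f := id) (pastSigma_le hmeas j) (hmeas _).aemeasurable
    (measurableSet_Surv_pastSigma j) aestronglyMeasurable_id

lemma measurable_T (hmeas : ∀ k, Measurable (X k)) : Measurable (T X g) := by
  refine measurable_to_countable' fun x => ?_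
  rcases x with _ | j
  · have hT0 : T X g ⁻¹' {0} = (⋃ j, {ω | T X g ω = j + 1})ᶜ := by
      ext ω
      simp only [Set.mem_preimage, Set.mem_singleton_iff, Set.mem_compl_iff, Set.mem_iUnion,
        Set.mem_ofPred_eq, not_exists]
      exact ⟨fun h j => by omega, fun h => by by_contra hne; exact h (T X g ω - 1) (by omega)⟩
    rw [hT0]
    exact (MeasurableSet.iUnion (measurableSet_T_eq_succ hmeas)).compl
  · exact measurableSet_T_eq_succ hmeas j

lemma integrable_Z (hint : ∀ k, 1 ≤ k → Integrable (X k) μ) [IsFiniteMeasure μ] (n : ℕ) :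
    Integrable (Z X g n) μ :=
  (integrable_finsetSum _ fun k hk => hint k (mem_Icc.1 hk).1).sub (integrable_const _)

lemma integrableOn_Z_T [IsFiniteMeasure μ] (hmeas : ∀ k, Measurable (X k))
    (hint : ∀ k, 1 ≤ k → Integrable (X k) μ) (a b : ℕ) :
    IntegrableOn (fun ω => Z X g (T X g ω) ω) {ω | a < T X g ω ∧ T X g ω ≤ b} μ := by
  have hpiece : ∀ j ∈ range b,
      IntegrableOn (fun ω => Z X g (T X g ω) ω) {ω | T X g ω = j + 1} μ :=
    fun j _ => (integrable_Z hint (j + 1)).integrableOn.congr_fun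
      (fun ω (hω : T X g ω = j + 1) => by rw [hω]) (measurableSet_T_eq_succ hmeas j)
  refine (integrableOn_finset_iUnion.2 hpiece).mono_set fun ω ⟨hlo, hhi⟩ => ?_
  exact Set.mem_biUnion (mem_range.2 (by omega : T X g ω - 1 < b))
    (by simp only [Set.mem_ofPred_eq]; omega)

lemma integral_Zstar_eq_setIntegral (hmeas : ∀ k, Measurable (X k)) (n : ℕ) :
    ∫ ω, Zstar X g n ω ∂μ = ∫ ω in Surv X g n, Z X g n ω ∂μ :=
  integral_indicator (measurableSet_Surv hmeas n)

lemma integral_Zstar_sub_integral_Zstar_succ [IsProbabilityMeasure μ]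
    (hmeas : ∀ k, Measurable (X k)) (hindep : iIndepFun X μ)
    (hint : ∀ k, 1 ≤ k → Integrable (X k) μ) (hmean : ∀ k, 1 ≤ k → ∫ ω, X k ω ∂μ = 0) (j : ℕ) :
    (∫ ω, Zstar X g j ω ∂μ) - ∫ ω, Zstar X g (j + 1) ω ∂μ =
      (g (j + 1) - g j) * μ.real (Surv X g j) +
        ∫ ω in {ω | T X g ω = j + 1}, Z X g (j + 1) ω ∂μ := by
  have hZj := (integrable_Z hint j (g := g)).integrableOn (s := Surv X g j)
  have hXj := (hint (j + 1) j.succ_pos).integrableOn (s := Surv X g j)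
  have hdrift : ∫ ω in Surv X g j, Z X g (j + 1) ω ∂μ =
      (∫ ω in Surv X g j, Z X g j ω ∂μ) - (g (j + 1) - g j) * μ.real (Surv X g j) := by
    simp only [Z_succ j]
    rw [integral_sub (f := fun ω => Z X g j ω + X (j + 1) ω) (hZj.add hXj) (integrable_const _),
      integral_add hZj hXj, setIntegral_Surv_X_succ hmeas hindep, hmean _ j.succ_pos,
      setIntegral_const, smul_eq_mul]
    ring
  rw [integral_Zstar_eq_setIntegral hmeas, integral_Zstar_eq_setIntegral hmeas, setOf_T_eq_succ,
    setIntegral_sdiff (measurableSet_Surv hmeas _) (integrable_Z hint _).integrableOn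
      (Surv_antitone j.le_succ), hdrift]
  ring

lemma integral_Zstar_sub_integral_Zstar [IsProbabilityMeasure μ]
    (hmeas : ∀ k, Measurable (X k)) (hindep : iIndepFun X μ)
    (hint : ∀ k, 1 ≤ k → Integrable (X k) μ) (hmean : ∀ k, 1 ≤ k → ∫ ω, X k ω ∂μ = 0)
    {k n : ℕ} (hkn : k ≤ n) :
    (∫ ω, Zstar X g k ω ∂μ) - ∫ ω, Zstar X g n ω ∂μ =
      ∑ j ∈ Ico k n, (g (j + 1) - g j) * μ.real (Surv X g j) +
        ∫ ω in {ω | k < T X g ω ∧ T X g ω ≤ n}, Z X g (T X g ω) ω ∂μ := by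
  induction n, hkn using Nat.le_induction with
  | base =>
    have hempty : {ω | k < T X g ω ∧ T X g ω ≤ k} = ∅ :=
      Set.eq_empty_of_forall_notMem fun ω h => (h.1.trans_le h.2).false
    simp [hempty]
  | succ n hkn ih =>
    have hsplit : {ω | k < T X g ω ∧ T X g ω ≤ n + 1} =
        {ω | k < T X g ω ∧ T X g ω ≤ n} ∪ {ω | T X g ω = n + 1} := by
      ext ω; simp only [Set.mem_union, Set.mem_ofPred_eq]; omega
    have hdisj : Disjoint {ω | k < T X g ω ∧ T X g ω ≤ n} {ω | T X g ω = n + 1} :=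
      Set.disjoint_left.2 fun ω h1 h2 => by simp only [Set.mem_ofPred_eq] at h1 h2; omega
    have hexit : ∫ ω in {ω | T X g ω = n + 1}, Z X g (T X g ω) ω ∂μ =
        ∫ ω in {ω | T X g ω = n + 1}, Z X g (n + 1) ω ∂μ :=
      setIntegral_congr_fun (measurableSet_T_eq_succ hmeas n)
        fun ω (hω : T X g ω = n + 1) => by rw [hω]
    rw [sum_Ico_succ_top hkn, hsplit, setIntegral_union hdisj (measurableSet_T_eq_succ hmeas n)
      (integrableOn_Z_T hmeas hint k n) ((integrableOn_Z_T hmeas hint n (n + 1)).mono_set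
        fun ω (hω : T X g ω = n + 1) => ⟨by omega, hω.le⟩), hexit]
    linarith [integral_Zstar_sub_integral_Zstar_succ (g := g) hmeas hindep hint hmean n]

lemma abs_setIntegral_Z_T_le [IsFiniteMeasure μ] (hmeas : ∀ k, Measurable (X k))
    (hint : ∀ k, 1 ≤ k → Integrable (X k) μ) {m k : ℕ} (hmk : m ≤ k) (n : ℕ) :
    |∫ ω in {ω | k < T X g ω ∧ T X g ω ≤ n}, Z X g (T X g ω) ω ∂μ| ≤
      ∫ ω in {ω | m < T X g ω ∧ T X g ω ≤ n}, -Z X g (T X g ω) ω ∂μ := by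
  have hs : ∀ a, MeasurableSet {ω | a < T X g ω ∧ T X g ω ≤ n} :=
    fun a => measurable_T hmeas measurableSet_Ioc
  have hnonpos : ∀ a, ∀ ω ∈ {ω | a < T X g ω ∧ T X g ω ≤ n}, Z X g (T X g ω) ω ≤ 0 :=
    fun a ω hω => Z_T_nonpos (by simp only [Set.mem_ofPred_eq] at hω; omega)
  rw [abs_of_nonpos (setIntegral_nonpos (hs k) (hnonpos k)), ← integral_neg]
  exact setIntegral_mono_set (integrableOn_Z_T hmeas hint m n).neg
    (ae_restrict_of_forall_mem (hs m) fun ω hω => neg_nonneg.2 (hnonpos m ω hω))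
    (Eventually.of_forall fun ω hω => ⟨hmk.trans_lt hω.1, hω.2⟩)

end Integrals

theorem EZstar_difference_bound_general
    {Ω : Type*} [MeasurableSpace Ω] (μ : Measure Ω) [IsProbabilityMeasure μ]
    (X : ℕ → Ω → ℝ) (g : ℕ → ℝ)
    (hmeas : ∀ k, Measurable (X k))
    (hindep : iIndepFun X μ)
    (hL2 : ∀ k, 1 ≤ k → MemLp (X k) 2 μ)
    (hmean : ∀ k, 1 ≤ k → ∫ ω, X k ω ∂μ = 0)
    (m n : ℕ) (hm : 1 ≤ m)
    (G : ℝ) (hG : IsGreatest {x : ℝ | ∃ k, 1 ≤ k ∧ k ≤ n ∧ |g k| = x} G) :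
    ∀ k, m ≤ k → k ≤ n →
      |(∫ ω, Zstar X g k ω ∂μ) - ∫ ω, Zstar X g n ω ∂μ| ≤
        2 * G * (μ (Surv X g m)).toReal +
          ∫ ω in {ω | m < T X g ω ∧ T X g ω ≤ n}, -(Z X g (T X g ω) ω) ∂μ := by
  intro k hmk hkn
  have hint : ∀ k, 1 ≤ k → Integrable (X k) μ := fun k hk => (hL2 k hk).integrable one_le_two
  have hP : Antitone fun j => μ.real (Surv X g j) :=
    fun _ _ hij => measureReal_mono (Surv_antitone hij)
  have hgG : ∀ j ∈ Icc k n, |g j| ≤ G := fun j hj =>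
    have hj' := mem_Icc.1 hj
    hG.2 ⟨j, by omega, hj'.2, rfl⟩
  have hG0 : 0 ≤ G := let ⟨_, _, _, hj⟩ := hG.1; hj ▸ abs_nonneg _
  rw [integral_Zstar_sub_integral_Zstar hmeas hindep hint hmean hkn, ← measureReal_def]
  calc _ ≤ |∑ j ∈ Ico k n, (g (j + 1) - g j) * μ.real (Surv X g j)|
          + |∫ ω in {ω | k < T X g ω ∧ T X g ω ≤ n}, Z X g (T X g ω) ω ∂μ| := abs_add_le _ _
    _ ≤ 2 * G * μ.real (Surv X g k) +
          ∫ ω in {ω | m < T X g ω ∧ T X g ω ≤ n}, -Z X g (T X g ω) ω ∂μ :=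
        add_le_add (abs_sum_Ico_sub_mul_le hP hkn measureReal_nonneg hgG)
          (abs_setIntegral_Z_T_le hmeas hint hmk n)
    _ ≤ _ := by gcongr 2 * G * ?_ + _; exact hP hmk

theorem EZstar_difference_bound
    {Ω : Type*} [MeasurableSpace Ω] (μ : Measure Ω) [IsProbabilityMeasure μ]
    (X : ℕ → Ω → ℝ) (g : ℕ → ℝ)
    (hmeas : ∀ k, Measurable (X k))
    (hindep : iIndepFun X μ)
    (hL2 : ∀ k, 1 ≤ k → MemLp (X k) 2 μ)
    (hmean : ∀ k, 1 ≤ k → ∫ ω, X k ω ∂μ = 0)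
    (hvar : ∀ k, 1 ≤ k → 0 < ∫ ω, (X k ω) ^ 2 ∂μ)
    (m n : ℕ) (hm : 1 ≤ m) (hmn : m ≤ n)
    (G : ℝ) (hG : IsGreatest {x : ℝ | ∃ k, 1 ≤ k ∧ k ≤ n ∧ |g k| = x} G) :
    ∀ k, m ≤ k → k ≤ n →
      |(∫ ω, Zstar X g k ω ∂μ) - ∫ ω, Zstar X g n ω ∂μ| ≤
        2 * G * (μ (Surv X g m)).toReal +
          ∫ ω in {ω | m < T X g ω ∧ T X g ω ≤ n}, -(Z X g (T X g ω) ω) ∂μ :=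
  EZstar_difference_bound_general μ X g hmeas hindep hL2 hmean m n hm G hG
end FirstPassage
end
end

section
/- Let X₁,…,Xₙ be independent and suppose P(T_g > n) > 0. Then for every real x, P(Sₙ > x | T_g > n) ≥ P(Sₙ > x); equivalently, P(Sₙ > x, T_g > n) ≥ P(Sₙ > x)·P(T_g > n). -/
/-!
Both `{S n > x}` and `{T_g > n}` are increasing events of the step vector `(X 1, …, X n)`, whose
law is a product of probability measures on `ℝ` by independence. Harris' inequality says that
increasing events are positively correlated under such a product; it follows by induction on
the number of factors, the one-dimensional case being Chebyshev's integral inequality for two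
monotone functions.
-/

open MeasureTheory ProbabilityTheory Filter Finset

noncomputable section
namespace FirstPassage

variable {Ω : Type*}

open scoped ENNReal

theorem _root_.ENNReal.mul_add_mul_le_mul_add_mul {a b c d : ℝ≥0∞} (hab : a ≤ b) (hcd : c ≤ d) :
    a * d + b * c ≤ a * c + b * d := by
  obtain ⟨p, rfl⟩ := exists_add_of_le hab
  obtain ⟨q, rfl⟩ := exists_add_of_le hcd
  calc a * (c + q) + (a + p) * c = a * c + (a + p) * c + a * q := by ring
    _ ≤ a * c + (a + p) * c + a * q + p * q := le_self_add
    _ = a * c + (a + p) * (c + q) := by ring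

theorem _root_.Monotone.mul_add_mul_le_mul_add_mul {α : Type*} [LinearOrder α] {F G : α → ℝ≥0∞}
    (hF : Monotone F) (hG : Monotone G) (x y : α) :
    F x * G y + F y * G x ≤ F x * G x + F y * G y := by
  rcases le_total x y with h | h
  · exact ENNReal.mul_add_mul_le_mul_add_mul (hF h) (hG h)
  · rw [add_comm (F x * G y), add_comm (F x * G x)]
    exact ENNReal.mul_add_mul_le_mul_add_mul (hF h) (hG h)

/-- Chebyshev's integral inequality, by integrating the rearrangement inequality
`F x * G y + F y * G x ≤ F x * G x + F y * G y` over `ν ⊗ ν`. -/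
theorem lintegral_mul_lintegral_le_lintegral_mul {α : Type*} [MeasurableSpace α] [LinearOrder α]
    (ν : Measure α) [IsProbabilityMeasure ν] {F G : α → ℝ≥0∞}
    (hFm : Measurable F) (hGm : Measurable G) (hF : Monotone F) (hG : Monotone G) :
    (∫⁻ x, F x ∂ν) * (∫⁻ x, G x ∂ν) ≤ ∫⁻ x, F x * G x ∂ν := by
  have cross : ∫⁻ x, ∫⁻ y, (F x * G y + F y * G x) ∂ν ∂ν
      = 2 * ((∫⁻ x, F x ∂ν) * (∫⁻ x, G x ∂ν)) := by
    simp_rw [lintegral_add_left (hGm.const_mul _), lintegral_const_mul _ hGm,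
      lintegral_mul_const _ hFm]
    rw [lintegral_add_left (hFm.mul_const _), lintegral_mul_const _ hFm,
      lintegral_const_mul _ hGm, two_mul]
  have diag : ∫⁻ x, ∫⁻ y, (F x * G x + F y * G y) ∂ν ∂ν = 2 * ∫⁻ x, F x * G x ∂ν := by
    simp_rw [lintegral_add_left measurable_const, lintegral_const, measure_univ, mul_one]
    rw [lintegral_add_right _ measurable_const, lintegral_const, measure_univ, mul_one, two_mul]
  rw [← ENNReal.mul_le_mul_iff_right two_ne_zero ENNReal.ofNat_ne_top, ← cross, ← diag]
  exact lintegral_mono fun x => lintegral_mono fun y => hF.mul_add_mul_le_mul_add_mul hG x y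

def HasHarrisInequality {β : Type*} [MeasurableSpace β] [Preorder β] (π : Measure β) : Prop :=
  ∀ A B : Set β, MeasurableSet A → MeasurableSet B → IsUpperSet A → IsUpperSet B →
    π A * π B ≤ π (A ∩ B)

theorem HasHarrisInequality.of_subsingleton {β : Type*} [MeasurableSpace β] [Preorder β]
    [Subsingleton β] (π : Measure β) [IsProbabilityMeasure π] : HasHarrisInequality π := by
  intro A B _ _ _ _
  rcases A.eq_empty_or_nonempty with rfl | hA
  · simp
  rw [hA.eq_univ, measure_univ, one_mul, Set.univ_inter]

theorem HasHarrisInequality.map_equiv {β γ : Type*} [MeasurableSpace β] [Preorder β]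
    [MeasurableSpace γ] [Preorder γ] {π : Measure β} {ρ : Measure γ} (h : HasHarrisInequality π)
    (e : β ≃ᵐ γ) (he : Monotone e) (hep : MeasurePreserving e π ρ) : HasHarrisInequality ρ := by
  intro A B hA hB hAu hBu
  rw [← hep.measure_preimage_equiv, ← hep.measure_preimage_equiv,
    ← hep.measure_preimage_equiv, Set.preimage_inter]
  exact h _ _ (e.measurable hA) (e.measurable hB) (hAu.preimage he) (hBu.preimage he)

/-- Slicing along the first coordinate, each pair of slices is correlated by hypothesis, and the
slice measures are monotone in the first coordinate, so Chebyshev's inequality correlates them. -/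
theorem HasHarrisInequality.prod {α β : Type*} [MeasurableSpace α] [LinearOrder α]
    [MeasurableSpace β] [Preorder β] (ν : Measure α) [IsProbabilityMeasure ν] {π : Measure β}
    [SFinite π] (h : HasHarrisInequality π) : HasHarrisInequality (ν.prod π) := by
  intro A B hA hB hAu hBu
  have slice_mono : ∀ {C : Set (α × β)}, IsUpperSet C → Monotone fun x => π (Prod.mk x ⁻¹' C) :=
    fun hC x x' hx => measure_mono fun w hw => hC (Prod.mk_le_mk.mpr ⟨hx, le_rfl⟩) hw
  have slice_upper : ∀ {C : Set (α × β)} (x : α), IsUpperSet C → IsUpperSet (Prod.mk x ⁻¹' C) :=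
    fun x hC => hC.preimage fun w w' hw => Prod.mk_le_mk.mpr ⟨le_rfl, hw⟩
  calc ν.prod π A * ν.prod π B
      = (∫⁻ x, π (Prod.mk x ⁻¹' A) ∂ν) * ∫⁻ x, π (Prod.mk x ⁻¹' B) ∂ν := by
        rw [Measure.prod_apply hA, Measure.prod_apply hB]
    _ ≤ ∫⁻ x, π (Prod.mk x ⁻¹' A) * π (Prod.mk x ⁻¹' B) ∂ν :=
        lintegral_mul_lintegral_le_lintegral_mul ν (measurable_measure_prodMk_left hA)
          (measurable_measure_prodMk_left hB) (slice_mono hAu) (slice_mono hBu)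
    _ ≤ ∫⁻ x, π (Prod.mk x ⁻¹' (A ∩ B)) ∂ν := lintegral_mono fun x =>
        h _ _ (measurable_prodMk_left hA) (measurable_prodMk_left hB)
          (slice_upper x hAu) (slice_upper x hBu)
    _ = ν.prod π (A ∩ B) := (Measure.prod_apply (hA.inter hB)).symm

theorem hasHarrisInequality_pi_fin {α : Type*} [MeasurableSpace α] [LinearOrder α] :
    ∀ {m : ℕ} (ν : Fin m → Measure α) [∀ i, IsProbabilityMeasure (ν i)],
      HasHarrisInequality (Measure.pi ν)
  | 0, ν, _ => .of_subsingleton _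
  | m + 1, ν, _ => by
    have hcons : Monotone fun p : α × (Fin m → α) => (Fin.cons p.1 p.2 : Fin (m + 1) → α) :=
      fun p q hpq => Fin.cons_le_cons.mpr hpq
    refine ((hasHarrisInequality_pi_fin _).prod (ν 0)).map_equiv
      (MeasurableEquiv.piFinSuccAbove (fun _ => α) 0).symm ?_
      (measurePreserving_piFinSuccAbove ν 0).symm
    simpa [MeasurableEquiv.piFinSuccAbove_symm_apply, Fin.insertNthEquiv, Fin.insertNth_zero']
      using hcons

theorem hasHarrisInequality_pi {ι α : Type*} [Fintype ι] [MeasurableSpace α] [LinearOrder α]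
    (ν : ι → Measure α) [∀ i, IsProbabilityMeasure (ν i)] : HasHarrisInequality (Measure.pi ν) := by
  let e := (Fintype.equivFin ι).symm
  refine (hasHarrisInequality_pi_fin fun j => ν (e j)).map_equiv
    (MeasurableEquiv.piCongrLeft (fun _ => α) e) ?_ (measurePreserving_piCongrLeft ν e)
  intro v w hvw i
  obtain ⟨j, rfl⟩ := e.surjective i
  simpa [MeasurableEquiv.piCongrLeft, Equiv.piCongrLeft_apply_apply] using hvw j

theorem _root_.ProbabilityTheory.iIndepFun.measure_mul_le_measure_inter_of_isUpperSet
    {Ω ι α : Type*} [MeasurableSpace Ω] {μ : Measure Ω} [Fintype ι] [MeasurableSpace α]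
    [LinearOrder α] {Y : ι → Ω → α} (hindep : iIndepFun Y μ) (hY : ∀ i, Measurable (Y i))
    {A B : Set (ι → α)} (hA : MeasurableSet A) (hB : MeasurableSet B)
    (hAu : IsUpperSet A) (hBu : IsUpperSet B) :
    μ ((fun ω i => Y i ω) ⁻¹' A) * μ ((fun ω i => Y i ω) ⁻¹' B) ≤
      μ ((fun ω i => Y i ω) ⁻¹' (A ∩ B)) := by
  have := hindep.isProbabilityMeasure
  have hYv : Measurable fun ω i => Y i ω := measurable_pi_lambda _ hY
  have hmap := hindep.map_fun_eq_pi_map fun i => (hY i).aemeasurable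
  have _ : ∀ i, IsProbabilityMeasure (μ.map (Y i)) :=
    fun i => Measure.isProbabilityMeasure_map (hY i).aemeasurable
  rw [← Measure.map_apply hYv hA, ← Measure.map_apply hYv hB,
    ← Measure.map_apply hYv (hA.inter hB), hmap]
  exact hasHarrisInequality_pi _ A B hA hB hAu hBu

theorem S_eq_sum_filter (X : ℕ → Ω → ℝ) {k n : ℕ} (hk : k ≤ n) (ω : Ω) :
    S X k ω = ∑ i : Finset.Icc 1 n with i.1 ≤ k, X i ω := by
  rw [Finset.sum_filter, Finset.sum_coe_sort (Finset.Icc 1 n) fun i => if i ≤ k then X i ω else 0,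
    ← Finset.sum_filter, S]
  congr 1
  ext i
  simp only [Finset.mem_filter, Finset.mem_Icc]
  omega

theorem monotone_sum_filter {ι : Type*} [Fintype ι] (p : ι → Prop) [DecidablePred p] :
    Monotone fun v : ι → ℝ => ∑ i with p i, v i :=
  fun _ _ hvw => Finset.sum_le_sum fun i _ => hvw i

theorem measurable_sum_filter {ι : Type*} [Fintype ι] (p : ι → Prop) [DecidablePred p] :
    Measurable fun v : ι → ℝ => ∑ i with p i, v i :=
  Finset.measurable_sum _ fun i _ => measurable_pi_apply i

theorem measure_mul_measure_surv_le_measure_inter [MeasurableSpace Ω] (μ : Measure Ω)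
    (X : ℕ → Ω → ℝ) (g : ℕ → ℝ) (hmeas : ∀ k, Measurable (X k)) (hindep : iIndepFun X μ)
    (n : ℕ) (x : ℝ) :
    μ {ω | x < S X n ω} * μ (Surv X g n) ≤ μ ({ω | x < S X n ω} ∩ Surv X g n) := by
  let A : Set (Finset.Icc 1 n → ℝ) := {v | x < ∑ i with i.1 ≤ n, v i}
  let B : Set (Finset.Icc 1 n → ℝ) := {v | ∀ k ∈ Finset.Icc 1 n, g k < ∑ i with i.1 ≤ k, v i}
  have hA : {ω | x < S X n ω} = (fun ω (i : Finset.Icc 1 n) => X i ω) ⁻¹' A := by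
    ext ω
    simp [A, S_eq_sum_filter X le_rfl]
  have hB : Surv X g n = (fun ω (i : Finset.Icc 1 n) => X i ω) ⁻¹' B := by
    ext ω
    refine forall₂_congr fun k hk => ?_
    rw [S_eq_sum_filter X (Finset.mem_Icc.mp hk).2]
  rw [hA, hB]
  refine (hindep.precomp Subtype.val_injective).measure_mul_le_measure_inter_of_isUpperSet
    (fun i => hmeas i.1) (measurableSet_lt measurable_const (measurable_sum_filter _)) ?_
    (fun v w hvw hv => hv.trans_le (monotone_sum_filter _ hvw))
    (fun v w hvw hv k hk => (hv k hk).trans_le (monotone_sum_filter _ hvw))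
  simp only [B, Set.ofPred_forall]
  exact .biInter (Finset.countable_toSet _) fun k _ =>
    measurableSet_lt measurable_const (measurable_sum_filter _)

theorem conditioned_walk_stochastically_larger
    {Ω : Type*} [MeasurableSpace Ω] (μ : Measure Ω) [IsProbabilityMeasure μ]
    (X : ℕ → Ω → ℝ) (g : ℕ → ℝ)
    (hmeas : ∀ k, Measurable (X k))
    (hindep : iIndepFun X μ)
    (n : ℕ) (hn : 0 < μ (Surv X g n)) :
    ∀ x : ℝ,
      μ {ω | x < S X n ω} * μ (Surv X g n) ≤
        μ ({ω | x < S X n ω} ∩ Surv X g n) ∧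
      (μ {ω | x < S X n ω}).toReal ≤
        (μ ({ω | x < S X n ω} ∩ Surv X g n)).toReal / (μ (Surv X g n)).toReal := by
  intro x
  have key := measure_mul_measure_surv_le_measure_inter μ X g hmeas hindep n x
  refine ⟨key, ?_⟩
  rw [le_div_iff₀ (ENNReal.toReal_pos hn.ne' (measure_ne_top μ _)), ← ENNReal.toReal_mul]
  exact ENNReal.toReal_mono (measure_ne_top _ _) key
end FirstPassage
end
end
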